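/- Let l ≥ 1, let ζ = exp(2π√−1/(2l)), and let G ⊂ GL(4, ℂ) be the group of type (G)_{l,1} generated by the three 4 × 4 matrices A = blockdiag(diag(ζ, ζ⁻¹), diag(ζ, ζ⁻¹)), B = blockdiag(((0, √−1), (√−1, 0)), ((0, −√−1), (−√−1, 0))), and σ = ((0, I₂), (I₂, 0)). Then each of A, B, σ lies in Sp(ℂ⁴, ω), where ω(u, v) = u₁v₂ − u₂v₁ + u₃v₄ − u₄v₃, and the 2-dimensional subspace L = {v ∈ ℂ⁴ : v₁ = v₃ and v₂ = −v₄} is a Lagrangian subspace of (ℂ⁴, ω) that is mapped onto itself by each of A, B, σ, hence by all of G. In particular G is an improper symplectic reflection group. -/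
import Mathlib

set_option maxHeartbeats 1000000

/-- The standard symplectic form `ω(u, v) = u₁v₂ - u₂v₁ + u₃v₄ - u₄v₃` on `ℂ⁴`. -/
def omega4 (u v : Fin 4 → ℂ) : ℂ := u 0 * v 1 - u 1 * v 0 + u 2 * v 3 - u 3 * v 2

/-- The subspace `L = {v ∈ ℂ⁴ : v₁ = v₃ and v₂ = -v₄}`. -/
noncomputable def Lsub : Submodule ℂ (Fin 4 → ℂ) where
  carrier := {v | v 0 = v 2 ∧ v 1 = -v 3}
  add_mem' := fun ha hb =>
    ⟨by simp only [Pi.add_apply, ha.1, hb.1],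
     by simp only [Pi.add_apply, ha.2, hb.2]; ring⟩
  zero_mem' := ⟨rfl, by simp⟩
  smul_mem' := fun c v hv =>
    ⟨by simp only [Pi.smul_apply, hv.1],
     by simp only [Pi.smul_apply, hv.2, smul_eq_mul]; ring⟩

lemma mem_Lsub (v : Fin 4 → ℂ) : v ∈ Lsub ↔ v 0 = v 2 ∧ v 1 = -v 3 := Iff.rfl

/-- A linear equivalence `Lsub ≃ ℂ × ℂ`. -/
noncomputable def Lequiv : Lsub ≃ₗ[ℂ] ℂ × ℂ where
  toFun v := (v.1 0, v.1 1)
  map_add' u v := rfl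
  map_smul' c v := rfl
  invFun p := ⟨![p.1, p.2, p.1, -p.2], by constructor <;> simp⟩
  left_inv v := by
    ext i
    fin_cases i <;> simp [v.2.1, v.2.2]
  right_inv p := rfl

lemma finrank_Lsub : Module.finrank ℂ Lsub = 2 := by
  rw [Lequiv.finrank_eq]
  simp

lemma image_Lsub_eq (M M' : Matrix (Fin 4) (Fin 4) ℂ)
    (h1 : ∀ v ∈ Lsub, M.mulVec v ∈ Lsub)
    (h2 : ∀ v ∈ Lsub, M'.mulVec v ∈ Lsub)
    (h3 : ∀ v ∈ Lsub, M.mulVec (M'.mulVec v) = v) :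
    M.mulVec '' Lsub = Lsub := by
  apply Set.Subset.antisymm
  · rintro _ ⟨v, hv, rfl⟩
    exact h1 v hv
  · intro v hv
    exact ⟨M'.mulVec v, h2 v hv, h3 v hv⟩

/-- For the group of type (G)_{l,1}, generated by
`A = blockdiag(diag(ζ, ζ⁻¹), diag(ζ, ζ⁻¹))`,
`B = blockdiag(((0,√-1),(√-1,0)), ((0,-√-1),(-√-1,0)))` and `σ = ((0,I₂),(I₂,0))` with
`ζ = exp(2π√-1/(2l))`: each of `A`, `B`, `σ` is symplectic for `ω`, and
`L = {v : v₁ = v₃, v₂ = -v₄}` is a Lagrangian subspace mapped onto itself by each of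
`A`, `B`, `σ`, hence by the whole group they generate: the group of type (G)_{l,1} is an
improper symplectic reflection group. -/
theorem stmt_18 (l : ℕ) (hl : 1 ≤ l) (ζ : ℂ)
    (hζ : ζ = Complex.exp (2 * Real.pi * Complex.I / (2 * l : ℂ)))
    (A B S : Matrix (Fin 4) (Fin 4) ℂ)
    (hA : A = !![ζ, 0, 0, 0; 0, ζ⁻¹, 0, 0; 0, 0, ζ, 0; 0, 0, 0, ζ⁻¹])
    (hB : B = !![0, Complex.I, 0, 0; Complex.I, 0, 0, 0;
                 0, 0, 0, -Complex.I; 0, 0, -Complex.I, 0])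
    (hS : S = !![0, 0, 1, 0; 0, 0, 0, 1; 1, 0, 0, 0; 0, 1, 0, 0]) :
    (∀ u v, omega4 (A.mulVec u) (A.mulVec v) = omega4 u v) ∧
    (∀ u v, omega4 (B.mulVec u) (B.mulVec v) = omega4 u v) ∧
    (∀ u v, omega4 (S.mulVec u) (S.mulVec v) = omega4 u v) ∧
    Module.finrank ℂ Lsub = 2 ∧
    (∀ u ∈ Lsub, ∀ v ∈ Lsub, omega4 u v = 0) ∧
    A.mulVec '' Lsub = Lsub ∧ B.mulVec '' Lsub = Lsub ∧ S.mulVec '' Lsub = Lsub ∧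
    (∀ g ∈ Submonoid.closure ({A, B, S} : Set (Matrix (Fin 4) (Fin 4) ℂ)),
      g.mulVec '' Lsub = Lsub) := by
  have hζ0 : ζ ≠ 0 := hζ ▸ Complex.exp_ne_zero _
  have hz : ζ⁻¹ * ζ = 1 := inv_mul_cancel₀ hζ0
  subst hA hB hS
  have hAsymp : ∀ u v,
      omega4 ((!![ζ, 0, 0, 0; 0, ζ⁻¹, 0, 0; 0, 0, ζ, 0; 0, 0, 0, ζ⁻¹]).mulVec u)
        ((!![ζ, 0, 0, 0; 0, ζ⁻¹, 0, 0; 0, 0, ζ, 0; 0, 0, 0, ζ⁻¹]).mulVec v) = omega4 u v := by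
    intro u v
    simp [omega4, Matrix.mulVec, dotProduct, Fin.sum_univ_four]
    linear_combination (u 0 * v 1 - u 1 * v 0 + u 2 * v 3 - u 3 * v 2) * hz
  have hBsymp : ∀ u v,
      omega4 ((!![0, Complex.I, 0, 0; Complex.I, 0, 0, 0;
                 0, 0, 0, -Complex.I; 0, 0, -Complex.I, 0]).mulVec u)
        ((!![0, Complex.I, 0, 0; Complex.I, 0, 0, 0;
                 0, 0, 0, -Complex.I; 0, 0, -Complex.I, 0]).mulVec v) = omega4 u v := by
    intro u v
    simp [omega4, Matrix.mulVec, dotProduct, Fin.sum_univ_four]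
    linear_combination (-(u 0 * v 1) + u 1 * v 0 - u 2 * v 3 + u 3 * v 2) * Complex.I_sq
  have hSsymp : ∀ u v,
      omega4 ((!![(0:ℂ), 0, 1, 0; 0, 0, 0, 1; 1, 0, 0, 0; 0, 1, 0, 0]).mulVec u)
        ((!![(0:ℂ), 0, 1, 0; 0, 0, 0, 1; 1, 0, 0, 0; 0, 1, 0, 0]).mulVec v) = omega4 u v := by
    intro u v
    simp [omega4, Matrix.mulVec, dotProduct, Fin.sum_univ_four]
    ring
  have hAim : (!![ζ, 0, 0, 0; 0, ζ⁻¹, 0, 0; 0, 0, ζ, 0; 0, 0, 0, ζ⁻¹]).mulVec '' Lsub = Lsub := by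
    apply image_Lsub_eq _ !![ζ⁻¹, 0, 0, 0; 0, ζ, 0, 0; 0, 0, ζ⁻¹, 0; 0, 0, 0, ζ]
    · rintro v ⟨h1, h2⟩
      rw [mem_Lsub]
      constructor <;> simp [Matrix.mulVec, dotProduct, Fin.sum_univ_four, h1, h2]
    · rintro v ⟨h1, h2⟩
      rw [mem_Lsub]
      constructor <;> simp [Matrix.mulVec, dotProduct, Fin.sum_univ_four, h1, h2]
    · rintro v ⟨h1, h2⟩
      ext i
      rw [Matrix.mulVec_mulVec]
      fin_cases i <;>
        · simp [Matrix.mulVec, dotProduct, Fin.sum_univ_four, Matrix.mul_apply]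
          try linear_combination v _ * hz
  have hBim : (!![0, Complex.I, 0, 0; Complex.I, 0, 0, 0;
                 0, 0, 0, -Complex.I; 0, 0, -Complex.I, 0]).mulVec '' Lsub = Lsub := by
    apply image_Lsub_eq _ !![0, -Complex.I, 0, 0; -Complex.I, 0, 0, 0;
                 0, 0, 0, Complex.I; 0, 0, Complex.I, 0]
    · rintro v ⟨h1, h2⟩
      rw [mem_Lsub]
      constructor <;> simp [Matrix.mulVec, dotProduct, Fin.sum_univ_four, h1, h2]
    · rintro v ⟨h1, h2⟩
      rw [mem_Lsub]
      constructor <;> simp [Matrix.mulVec, dotProduct, Fin.sum_univ_four, h1, h2]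
    · rintro v ⟨h1, h2⟩
      ext i
      rw [Matrix.mulVec_mulVec]
      fin_cases i <;>
        · simp [Matrix.mulVec, dotProduct, Fin.sum_univ_four, Matrix.mul_apply]
          try linear_combination (-(v _)) * Complex.I_sq
  have hSim : (!![(0:ℂ), 0, 1, 0; 0, 0, 0, 1; 1, 0, 0, 0; 0, 1, 0, 0]).mulVec '' Lsub = Lsub := by
    apply image_Lsub_eq _ !![(0:ℂ), 0, 1, 0; 0, 0, 0, 1; 1, 0, 0, 0; 0, 1, 0, 0]
    · rintro v ⟨h1, h2⟩
      rw [mem_Lsub]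
      constructor <;> simp [Matrix.mulVec, dotProduct, Fin.sum_univ_four, h1, h2]
    · rintro v ⟨h1, h2⟩
      rw [mem_Lsub]
      constructor <;> simp [Matrix.mulVec, dotProduct, Fin.sum_univ_four, h1, h2]
    · rintro v ⟨h1, h2⟩
      ext i
      rw [Matrix.mulVec_mulVec]
      fin_cases i <;>
        · simp [Matrix.mulVec, dotProduct, Fin.sum_univ_four, Matrix.mul_apply]
  refine ⟨hAsymp, hBsymp, hSsymp, finrank_Lsub, ?_, hAim, hBim, hSim, ?_⟩
  · rintro u ⟨hu1, hu2⟩ v ⟨hv1, hv2⟩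
    simp only [omega4, hu1, hu2, hv1, hv2]
    ring
  · intro g hg
    induction hg using Submonoid.closure_induction with
    | mem x hx =>
      rcases hx with rfl | rfl | rfl
      · exact hAim
      · exact hBim
      · exact hSim
    | one =>
      have : (1 : Matrix (Fin 4) (Fin 4) ℂ).mulVec = id := by
        funext v; simp [Matrix.one_mulVec]
      rw [this, Set.image_id]
    | mul x y hx hy ihx ihy =>
      have : (x * y).mulVec = x.mulVec ∘ y.mulVec := by
        funext v; simp [Matrix.mulVec_mulVec]
      rw [this, Set.image_comp, ihy, ihx]
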